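/- (Model LB with linear costs; Cavalli–Naimzada) For all c1, c2 > 0, the system q1 = S1(q1,q2), q2 = sqrt(q1/c2) - q1 with q1, q2 > 0, where S1(x,y) = (2x + y - c1*(x+y)^2)/2, has exactly one solution, namely q1* = c2/(c1+c2)^2, q2* = c1/(c1+c2)^2; moreover, if 0 < c1/c2 < 3 + 2*sqrt(3), then the Jacobian matrix J = [[dS1/dq1, dS1/dq2],[R2'(q1*), 0]] evaluated at (q1*,q2*), with R2'(q1) = 1/(2*sqrt(c2*q1)) - 1, satisfies Jury's conditions 1 + tr(J) + det(J) > 0, 1 - tr(J) + det(J) > 0, and 1 - det(J) > 0, so the equilibrium is locally stable. -/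

import Mathlib

/-- The LMA reaction map with own output `x` and rival output `y`, for a firm
with linear cost coefficient `c`. -/
noncomputable def Slin (c x y : ℝ) : ℝ := (2 * x + y - c * (x + y) ^ 2) / 2

lemma deriv_Slin_x (c y x : ℝ) : deriv (fun x => Slin c x y) x = 1 - c * (x + y) := by
  have h1 : HasDerivAt (fun x : ℝ => x + y) 1 x := (hasDerivAt_id x).add_const y
  have h2 : HasDerivAt (fun x : ℝ => (x + y) ^ 2) (2 * (x + y)) x := by
    simpa using h1.fun_pow 2
  have h3 : HasDerivAt (fun x : ℝ => 2 * x + y) 2 x := by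
    simpa using ((hasDerivAt_id x).const_mul 2).add_const y
  have h : HasDerivAt (fun x : ℝ => Slin c x y) (1 - c * (x + y)) x := by
    have := (h3.fun_sub (h2.const_mul c)).div_const 2
    exact this.congr_deriv (by ring)
  exact h.deriv

lemma deriv_Slin_y (c x y : ℝ) : deriv (fun y => Slin c x y) y = (1 - 2 * c * (x + y)) / 2 := by
  have h1 : HasDerivAt (fun y : ℝ => x + y) 1 y := by
    simpa using (hasDerivAt_id y).const_add x
  have h2 : HasDerivAt (fun y : ℝ => (x + y) ^ 2) (2 * (x + y)) y := by
    simpa using h1.fun_pow 2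
  have h3 : HasDerivAt (fun y : ℝ => 2 * x + y) 1 y := (hasDerivAt_id y).const_add (2 * x)
  have h : HasDerivAt (fun y : ℝ => Slin c x y) ((1 - 2 * c * (x + y)) / 2) y := by
    have := (h3.fun_sub (h2.const_mul c)).div_const 2
    exact this.congr_deriv (by ring)
  exact h.deriv

/-- Model LB with linear costs (Cavalli–Naimzada): the equilibrium system
`q1 = S1(q1,q2)`, `q2 = √(q1/c2) - q1` has exactly one positive solution
`q1* = c2/(c1+c2)^2`, `q2* = c1/(c1+c2)^2`; and if `0 < c1/c2 < 3 + 2*√3`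
then the Jacobian `[[dS1/dq1, dS1/dq2],[R2'(q1*), 0]]` at the equilibrium
satisfies Jury's conditions, so the equilibrium is locally stable. -/
theorem modelLB_linear (c1 c2 : ℝ) (hc1 : 0 < c1) (hc2 : 0 < c2) :
    (∀ q1 q2 : ℝ,
      (0 < q1 ∧ 0 < q2 ∧ q1 = Slin c1 q1 q2 ∧
        q2 = Real.sqrt (q1 / c2) - q1) ↔
      (q1 = c2 / (c1 + c2) ^ 2 ∧ q2 = c1 / (c1 + c2) ^ 2)) ∧
    (0 < c1 / c2 → c1 / c2 < 3 + 2 * Real.sqrt 3 →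
      ∀ J : Matrix (Fin 2) (Fin 2) ℝ,
        J = !![deriv (fun x => Slin c1 x (c1 / (c1 + c2) ^ 2)) (c2 / (c1 + c2) ^ 2),
               deriv (fun y => Slin c1 (c2 / (c1 + c2) ^ 2) y) (c1 / (c1 + c2) ^ 2);
               1 / (2 * Real.sqrt (c2 * (c2 / (c1 + c2) ^ 2))) - 1, 0] →
        1 + Matrix.trace J + Matrix.det J > 0 ∧
        1 - Matrix.trace J + Matrix.det J > 0 ∧
        1 - Matrix.det J > 0) := by
  have hs : 0 < c1 + c2 := by linarith
  have hs2 : (0:ℝ) < (c1 + c2) ^ 2 := by positivity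
  constructor
  · intro q1 q2
    constructor
    · rintro ⟨hq1, hq2, he1, he2⟩
      -- from he1: q2 = c1 * (q1+q2)^2
      have h1 : q2 = c1 * (q1 + q2) ^ 2 := by
        unfold Slin at he1
        field_simp at he1
        linarith
      -- from he2: q1 + q2 = sqrt (q1/c2)
      have h2 : q1 + q2 = Real.sqrt (q1 / c2) := by linarith
      have h3 : (q1 + q2) ^ 2 = q1 / c2 := by
        rw [h2, Real.sq_sqrt]
        positivity
      have h4 : q1 = c2 * (q1 + q2) ^ 2 := by
        rw [h3]; field_simp
      have hsum : q1 + q2 = (c1 + c2) * (q1 + q2) ^ 2 := by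
        nlinarith [h1, h4]
      have hspos : 0 < q1 + q2 := by linarith
      have hval : q1 + q2 = 1 / (c1 + c2) := by
        have : (c1 + c2) * (q1 + q2) = 1 := by
          have h := hsum
          nlinarith
        field_simp
        linarith
      constructor
      · rw [h4, hval]; field_simp; try ring
      · rw [h1, hval]; field_simp; try ring
    · rintro ⟨hq1, hq2⟩
      subst hq1 hq2
      have hsum : c2 / (c1 + c2) ^ 2 + c1 / (c1 + c2) ^ 2 = 1 / (c1 + c2) := by
        field_simp; ring
      refine ⟨by positivity, by positivity, ?_, ?_⟩
      · unfold Slin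
        rw [hsum]
        field_simp
        try ring
      · have : c2 / (c1 + c2) ^ 2 / c2 = (1 / (c1 + c2)) ^ 2 := by
          field_simp
        rw [this, Real.sqrt_sq (by positivity)]
        field_simp
        ring
  · intro _ hr J hJ
    have hsum : c2 / (c1 + c2) ^ 2 + c1 / (c1 + c2) ^ 2 = 1 / (c1 + c2) := by
      field_simp; ring
    have hsqrt : Real.sqrt (c2 * (c2 / (c1 + c2) ^ 2)) = c2 / (c1 + c2) := by
      have : c2 * (c2 / (c1 + c2) ^ 2) = (c2 / (c1 + c2)) ^ 2 := by
        field_simp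
      rw [this, Real.sqrt_sq (by positivity)]
    have hJ11 : deriv (fun x => Slin c1 x (c1 / (c1 + c2) ^ 2)) (c2 / (c1 + c2) ^ 2)
        = c2 / (c1 + c2) := by
      rw [deriv_Slin_x, hsum]
      field_simp
      try ring
    have hJ12 : deriv (fun y => Slin c1 (c2 / (c1 + c2) ^ 2) y) (c1 / (c1 + c2) ^ 2)
        = (c2 - c1) / (2 * (c1 + c2)) := by
      rw [deriv_Slin_y, hsum]
      field_simp
      try ring
    have hJ21 : 1 / (2 * Real.sqrt (c2 * (c2 / (c1 + c2) ^ 2))) - 1 = (c1 - c2) / (2 * c2) := by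
      rw [hsqrt]
      field_simp
      ring
    subst hJ
    rw [hJ11, hJ12, hJ21]
    rw [Matrix.trace_fin_two_of, Matrix.det_fin_two_of]
    have htr : c2 / (c1 + c2) + 0 = c2 / (c1 + c2) := by ring
    have hdet : c2 / (c1 + c2) * 0 - (c2 - c1) / (2 * (c1 + c2)) * ((c1 - c2) / (2 * c2))
        = (c1 - c2) ^ 2 / (4 * c2 * (c1 + c2)) := by
      field_simp
      ring
    rw [htr, hdet]
    have ht3 : Real.sqrt 3 ^ 2 = 3 := Real.sq_sqrt (by norm_num)
    have ht1 : 1 < Real.sqrt 3 := by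
      nlinarith [Real.sqrt_nonneg 3]
    have hc1lt : c1 < (3 + 2 * Real.sqrt 3) * c2 := by
      have := (div_lt_iff₀ hc2).mp hr
      linarith
    refine ⟨?_, ?_, ?_⟩
    · positivity
    · have h1 : 0 < 1 - c2 / (c1 + c2) := by
        rw [sub_pos, div_lt_one hs]; linarith
      have h2 : 0 ≤ (c1 - c2) ^ 2 / (4 * c2 * (c1 + c2)) := by positivity
      linarith
    · rw [gt_iff_lt, sub_pos, div_lt_one (by positivity)]
      have ht15 : (3:ℝ) / 2 < Real.sqrt 3 := by nlinarith [Real.sqrt_nonneg 3]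
      have key : 0 < ((3 + 2 * Real.sqrt 3) * c2 - c1) * (c1 + (2 * Real.sqrt 3 - 3) * c2) := by
        apply mul_pos (by linarith)
        have : 0 < (2 * Real.sqrt 3 - 3) * c2 := by
          apply mul_pos (by linarith) hc2
        linarith
      have expand : ((3 + 2 * Real.sqrt 3) * c2 - c1) * (c1 + (2 * Real.sqrt 3 - 3) * c2)
          = 6 * c1 * c2 + (4 * Real.sqrt 3 ^ 2 - 9) * c2 ^ 2 - c1 ^ 2 := by ring
      rw [expand, ht3] at key
      nlinarith [key]
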